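/- Wick symbol of a composition: for bounded continuous symbols B, C on ℂⁿ, the coherent state matrix element of the product of Toeplitz operators satisfies ⟨Ω_α, Q(B)Q(C)Ω_β⟩ = π^{-2n} ∬ e^{-|ξ₂|²-|ξ₁|²} e^{⟨α,ξ₂⟩ + ⟨ξ₂,ξ₁⟩ + ⟨ξ₁,β⟩} B(ξ̄₂,ξ₂) C(ξ̄₁,ξ₁) dξ₂ dξ₁. -/

import Mathlib

open MeasureTheory
open scoped ComplexConjugate BigOperators

noncomputable def hip {n : ℕ} (x y : Fin n → ℂ) : ℂ := ∑ i, conj (x i) * y i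

noncomputable def nsq {n : ℕ} (z : Fin n → ℂ) : ℝ := ∑ i, Complex.normSq (z i)

noncomputable def bargmannInner (n : ℕ) (f g : (Fin n → ℂ) → ℂ) : ℂ :=
  (Real.pi : ℂ) ^ (-(n : ℤ)) *
    ∫ z : Fin n → ℂ, Complex.exp (-(nsq z : ℝ)) * conj (f z) * g z

noncomputable def coherent (n : ℕ) (α : Fin n → ℂ) : (Fin n → ℂ) → ℂ :=
  fun z => Complex.exp (hip z α)

noncomputable def toeplitz (n : ℕ) (A : (Fin n → ℂ) → ℂ) (Ψ : (Fin n → ℂ) → ℂ) :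
    (Fin n → ℂ) → ℂ :=
  fun z => (Real.pi : ℂ) ^ (-(n : ℤ)) *
    ∫ ξ : Fin n → ℂ,
      Complex.exp (-(nsq ξ : ℝ)) * Complex.exp (hip z ξ) * A ξ * Ψ ξ

/-!
Unfolding `Q(B)` inside `⟨Ω_α, ·⟩` and exchanging the two integrals leaves, for each `ξ`, the
Gaussian integral `∫ e^{-|z|² + ⟨α,z⟩ + ⟨z,ξ⟩} dz = πⁿ e^{⟨α,ξ⟩}` (the reproducing property of
the coherent states, computed coordinatewise from the one-dimensional complex Gaussian).
Hence `⟨Ω_α, Q(A)Ψ⟩ = ⟨Ω_α, AΨ⟩` whenever `AΨ` grows at most like `e^{|ξ|²/2}`, which makes the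
exchange legitimate. The function `Ψ = Q(C)Ω_β` has this growth, and unfolding it once more gives
the double integral. All integrability bounds come from `Re⟨x,y⟩ ≤ s|x|² + t|y|²` for `4st ≥ 1`.
-/

theorem conj_hip {n : ℕ} (x y : Fin n → ℂ) : conj (hip x y) = hip y x := by
  simp only [hip, map_sum, map_mul, Complex.conj_conj, mul_comm]

theorem re_hip_le {n : ℕ} (x y : Fin n → ℂ) {s t : ℝ} (hs : 0 < s) (hst : 1 ≤ 4 * s * t) :
    (hip x y).re ≤ s * nsq x + t * nsq y := by
  simp only [hip, nsq, Complex.re_sum, Finset.mul_sum, ← Finset.sum_add_distrib]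
  refine Finset.sum_le_sum fun i _ => ?_
  have hre : (conj (x i) * y i).re ≤ ‖x i‖ * ‖y i‖ :=
    (Complex.re_le_norm _).trans (by rw [norm_mul, Complex.norm_conj])
  rw [← Complex.sq_norm, ← Complex.sq_norm]
  nlinarith [sq_nonneg (2 * s * ‖x i‖ - ‖y i‖), mul_nonneg hs.le (sq_nonneg ‖x i‖),
    mul_nonneg (sub_nonneg.2 hst) (sq_nonneg ‖y i‖)]

section Continuity

variable {X : Type*} [TopologicalSpace X] {n : ℕ}

@[fun_prop]
theorem Continuous.nsq {f : X → Fin n → ℂ} (hf : Continuous f) :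
    Continuous fun x => nsq (f x) := by
  unfold _root_.nsq
  fun_prop

@[fun_prop]
theorem Continuous.hip {f g : X → Fin n → ℂ} (hf : Continuous f) (hg : Continuous g) :
    Continuous fun x => hip (f x) (g x) := by
  unfold _root_.hip
  fun_prop

end Continuity

theorem integral_cexp_neg_normSq_add (a ξ : ℂ) :
    ∫ z : ℂ, Complex.exp (-(Complex.normSq z : ℝ) + conj a * z + conj z * ξ) =
      Real.pi * Complex.exp (conj a * ξ) := by
  have hsplit : ∀ p : ℝ × ℝ,
      Complex.exp (-(Complex.normSq (Complex.measurableEquivRealProd.symm p) : ℝ)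
        + conj a * Complex.measurableEquivRealProd.symm p
        + conj (Complex.measurableEquivRealProd.symm p) * ξ) =
      Complex.exp (-1 * (p.1 : ℂ) ^ 2 + (conj a + ξ) * p.1 + 0) *
        Complex.exp (-1 * (p.2 : ℂ) ^ 2 + Complex.I * (conj a - ξ) * p.2 + 0) := by
    rintro ⟨x, y⟩
    rw [← Complex.exp_add]
    have hz : Complex.measurableEquivRealProd.symm (x, y) = x + y * Complex.I := by
      simp [Complex.ext_iff]
    simp only [hz, Complex.normSq_add_mul_I, map_add, map_mul, Complex.conj_ofReal,
      Complex.conj_I]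
    push_cast
    ring_nf
  rw [← Complex.volume_preserving_equiv_real_prod.symm.integral_comp
      Complex.measurableEquivRealProd.symm.measurableEmbedding]
  simp_rw [hsplit]
  rw [Measure.volume_eq_prod, integral_prod_mul
      (fun x : ℝ => Complex.exp (-1 * (x : ℂ) ^ 2 + (conj a + ξ) * x + 0))
      (fun y : ℝ => Complex.exp (-1 * (y : ℂ) ^ 2 + Complex.I * (conj a - ξ) * y + 0)),
    integral_cexp_quadratic (by norm_num), integral_cexp_quadratic (by norm_num),
    mul_mul_mul_comm, ← Complex.exp_add, ← Complex.cpow_add _ _ (by simp [Real.pi_ne_zero])]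
  congr 1
  · norm_num
  · congr 1
    linear_combination (conj a - ξ) ^ 2 / 4 * Complex.I_sq

theorem integral_cexp_neg_nsq_add_hip {n : ℕ} (α ξ : Fin n → ℂ) :
    ∫ z : Fin n → ℂ, Complex.exp (-(nsq z : ℝ) + hip α z + hip z ξ) =
      (Real.pi : ℂ) ^ n * Complex.exp (hip α ξ) := by
  have hprod : ∀ z : Fin n → ℂ, Complex.exp (-(nsq z : ℝ) + hip α z + hip z ξ) =
      ∏ i, Complex.exp (-(Complex.normSq (z i) : ℝ) + conj (α i) * z i + conj (z i) * ξ i) := by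
    intro z
    simp only [← Complex.exp_sum, nsq, hip, Finset.sum_add_distrib, Finset.sum_neg_distrib]
    push_cast
    rfl
  simp_rw [hprod]
  rw [integral_fintype_prod_volume_eq_prod
    (fun i z => Complex.exp (-(Complex.normSq z : ℝ) + conj (α i) * z + conj z * ξ i))]
  simp only [integral_cexp_neg_normSq_add, Finset.prod_mul_distrib, Finset.prod_const,
    Finset.card_univ, Fintype.card_fin, ← Complex.exp_sum, hip]

theorem integrable_exp_neg_mul_normSq {c : ℝ} (hc : 0 < c) :
    Integrable fun z : ℂ => Real.exp (-c * Complex.normSq z) := by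
  have h := (GaussianFourier.integrable_cexp_neg_mul_sq_norm_add (V := ℂ) (b := c)
    (by simpa using hc) 0 0).norm
  simpa [Complex.norm_exp, ← Complex.sq_norm, ← Complex.ofReal_pow] using h

theorem integrable_exp_neg_mul_nsq (n : ℕ) {c : ℝ} (hc : 0 < c) :
    Integrable fun z : Fin n → ℂ => Real.exp (-c * nsq z) := by
  simp only [nsq, Finset.mul_sum, Real.exp_sum]
  exact Integrable.fintype_prod fun _ => integrable_exp_neg_mul_normSq hc

theorem aestronglyMeasurable_toeplitz {n : ℕ} {A Ψ : (Fin n → ℂ) → ℂ}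
    (hA : AEStronglyMeasurable A) (hΨ : AEStronglyMeasurable Ψ) :
    AEStronglyMeasurable (toeplitz n A Ψ) :=
  (AEStronglyMeasurable.integral_prod_right'
    (f := fun p : (Fin n → ℂ) × (Fin n → ℂ) =>
      Complex.exp (-(nsq p.2 : ℝ)) * Complex.exp (hip p.1 p.2) * A p.2 * Ψ p.2)
    (((Continuous.aestronglyMeasurable (by fun_prop)).mul hA.comp_snd).mul
      hΨ.comp_snd)).const_mul _

theorem exists_norm_toeplitz_coherent_le {n : ℕ} {C : (Fin n → ℂ) → ℂ} {M : ℝ}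
    (hC : ∀ ξ, ‖C ξ‖ ≤ M) (β : Fin n → ℂ) :
    ∃ K, ∀ z, ‖toeplitz n C (coherent n β) z‖ ≤ K * Real.exp (nsq z / 2) := by
  have hM : 0 ≤ M := (norm_nonneg _).trans (hC 0)
  refine ⟨Real.pi ^ (-(n : ℤ)) * (M * Real.exp (nsq β) *
    ∫ ξ : Fin n → ℂ, Real.exp (-(1 / 4) * nsq ξ)), fun z => ?_⟩
  have hpt : ∀ ξ, ‖Complex.exp (-(nsq ξ : ℝ)) * Complex.exp (hip z ξ) * C ξ *
      Complex.exp (hip ξ β)‖ ≤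
      M * Real.exp (nsq β) * Real.exp (nsq z / 2) * Real.exp (-(1 / 4) * nsq ξ) := by
    intro ξ
    have h₁ := re_hip_le z ξ (s := 1 / 2) (t := 1 / 2) (by norm_num) (by norm_num)
    have h₂ := re_hip_le ξ β (s := 1 / 4) (t := 1) (by norm_num) (by norm_num)
    calc _ = ‖C ξ‖ * Real.exp (-nsq ξ + (hip z ξ).re + (hip ξ β).re) := by
          simp only [norm_mul, Complex.norm_exp, Complex.neg_re, Complex.ofReal_re,
            Real.exp_add]
          ring
      _ ≤ M * Real.exp (nsq β + nsq z / 2 + -(1 / 4) * nsq ξ) :=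
          mul_le_mul (hC ξ) (Real.exp_le_exp.2 (by linarith)) (Real.exp_nonneg _) hM
      _ = _ := by rw [Real.exp_add, Real.exp_add]; ring
  calc ‖toeplitz n C (coherent n β) z‖
      = Real.pi ^ (-(n : ℤ)) * ‖∫ ξ, Complex.exp (-(nsq ξ : ℝ)) * Complex.exp (hip z ξ) * C ξ *
          Complex.exp (hip ξ β)‖ := by
        simp only [toeplitz, coherent, norm_mul, norm_zpow, Complex.norm_real,
          Real.norm_of_nonneg Real.pi_pos.le]
    _ ≤ Real.pi ^ (-(n : ℤ)) *
          ∫ ξ, M * Real.exp (nsq β) * Real.exp (nsq z / 2) * Real.exp (-(1 / 4) * nsq ξ) := by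
        gcongr
        exact norm_integral_le_of_norm_le
          ((integrable_exp_neg_mul_nsq n (by norm_num)).const_mul _) (.of_forall hpt)
    _ = _ := by rw [integral_const_mul]; ring

theorem integrable_coherent_toeplitz_integrand {n : ℕ} {f : (Fin n → ℂ) → ℂ} {K : ℝ}
    (hf : AEStronglyMeasurable f) (hK : ∀ ξ, ‖f ξ‖ ≤ K * Real.exp (nsq ξ / 2))
    (α : Fin n → ℂ) :
    Integrable (fun p : (Fin n → ℂ) × (Fin n → ℂ) =>
      Complex.exp (-(nsq p.1 : ℝ) + hip α p.1 + hip p.1 p.2) *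
        (Complex.exp (-(nsq p.2 : ℝ)) * f p.2)) (volume.prod volume) := by
  have hK0 : 0 ≤ K := nonneg_of_mul_nonneg_left ((norm_nonneg _).trans (hK 0)) (Real.exp_pos _)
  refine Integrable.mono' (((integrable_exp_neg_mul_nsq n (c := 1 / 6) (by norm_num)).mul_prod
      (integrable_exp_neg_mul_nsq n (c := 1 / 8) (by norm_num))).const_mul
      (K * Real.exp (3 / 2 * nsq α)))
    ((Continuous.aestronglyMeasurable (by fun_prop)).mul
      ((Continuous.aestronglyMeasurable (by fun_prop)).mul hf.comp_snd))
    (.of_forall fun ⟨z, ξ⟩ => ?_)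
  have h₁ := re_hip_le α z (s := 3 / 2) (t := 1 / 6) (by norm_num) (by norm_num)
  have h₂ := re_hip_le z ξ (s := 2 / 3) (t := 3 / 8) (by norm_num) (by norm_num)
  calc _ = ‖f ξ‖ * (Real.exp (-nsq z + (hip α z).re + (hip z ξ).re) * Real.exp (-nsq ξ)) := by
        simp only [norm_mul, Complex.norm_exp, Complex.add_re, Complex.neg_re, Complex.ofReal_re]
        ring
    _ ≤ K * Real.exp (nsq ξ / 2) *
          (Real.exp (-nsq z + (hip α z).re + (hip z ξ).re) * Real.exp (-nsq ξ)) := by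
        gcongr
        exact hK ξ
    _ = K * Real.exp (nsq ξ / 2 + (-nsq z + (hip α z).re + (hip z ξ).re) + -nsq ξ) := by
        simp only [Real.exp_add]
        ring
    _ ≤ K * Real.exp (3 / 2 * nsq α + -(1 / 6) * nsq z + -(1 / 8) * nsq ξ) :=
        mul_le_mul_of_nonneg_left (Real.exp_le_exp.2 (by linarith)) hK0
    _ = _ := by
        simp only [Real.exp_add]
        ring

theorem bargmannInner_coherent_toeplitz {n : ℕ} {A Ψ : (Fin n → ℂ) → ℂ} {K : ℝ}
    (hm : AEStronglyMeasurable (A * Ψ)) (hK : ∀ ξ, ‖A ξ * Ψ ξ‖ ≤ K * Real.exp (nsq ξ / 2))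
    (α : Fin n → ℂ) :
    bargmannInner n (coherent n α) (toeplitz n A Ψ) =
      bargmannInner n (coherent n α) (A * Ψ) := by
  have hpi : (Real.pi : ℂ) ≠ 0 := Complex.ofReal_ne_zero.2 Real.pi_ne_zero
  set G : (Fin n → ℂ) × (Fin n → ℂ) → ℂ := fun p =>
    Complex.exp (-(nsq p.1 : ℝ) + hip α p.1 + hip p.1 p.2) *
      (Complex.exp (-(nsq p.2 : ℝ)) * (A * Ψ) p.2) with hG
  have hGi : Integrable G (volume.prod volume) := integrable_coherent_toeplitz_integrand hm hK α
  have hinner : ∀ z, Complex.exp (-(nsq z : ℝ)) * conj (coherent n α z) * toeplitz n A Ψ z =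
      (Real.pi : ℂ) ^ (-(n : ℤ)) * ∫ ξ, G (z, ξ) := by
    intro z
    simp only [hG, coherent, toeplitz, ← Complex.exp_conj, conj_hip, ← integral_const_mul,
      Complex.exp_add, Pi.mul_apply]
    exact integral_congr_ae (.of_forall fun ξ => by ring)
  have houter : ∀ ξ, ∫ z, G (z, ξ) = (Real.pi : ℂ) ^ n *
      (Complex.exp (-(nsq ξ : ℝ)) * conj (coherent n α ξ) * (A * Ψ) ξ) := by
    intro ξ
    simp only [hG, integral_mul_const, integral_cexp_neg_nsq_add_hip, coherent,
      ← Complex.exp_conj, conj_hip]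
    ring
  calc bargmannInner n (coherent n α) (toeplitz n A Ψ)
      = (Real.pi : ℂ) ^ (-(n : ℤ)) * ((Real.pi : ℂ) ^ (-(n : ℤ)) * ∫ z, ∫ ξ, G (z, ξ)) := by
        simp only [bargmannInner, hinner, integral_const_mul]
    _ = (Real.pi : ℂ) ^ (-(n : ℤ)) * ((Real.pi : ℂ) ^ (-(n : ℤ)) * ∫ ξ, ∫ z, G (z, ξ)) := by
        rw [integral_integral_swap hGi]
    _ = (Real.pi : ℂ) ^ (-(n : ℤ)) * ((Real.pi : ℂ) ^ (-(n : ℤ)) * (Real.pi : ℂ) ^ n *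
          ∫ ξ, Complex.exp (-(nsq ξ : ℝ)) * conj (coherent n α ξ) * (A * Ψ) ξ) := by
        simp only [houter, integral_const_mul, mul_assoc]
    _ = bargmannInner n (coherent n α) (A * Ψ) := by
        rw [← zpow_natCast, ← zpow_add₀ hpi, neg_add_cancel, zpow_zero, one_mul, bargmannInner]

/-- The Wick symbol of a composition: for bounded continuous symbols
`B, C` on `ℂⁿ`,
`⟨Ω_α, Q(B)Q(C)Ω_β⟩ = π^{-2n} ∬ e^{-|ξ₂|²-|ξ₁|²} e^{⟨α,ξ₂⟩+⟨ξ₂,ξ₁⟩+⟨ξ₁,β⟩}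
B(ξ̄₂,ξ₂) C(ξ̄₁,ξ₁) dξ₂ dξ₁`. -/
theorem toeplitz_composition_matrix_element (n : ℕ) (B C : (Fin n → ℂ) → ℂ) (M : ℝ)
    (hB : Continuous B) (hC : Continuous C)
    (hMB : ∀ ξ, ‖B ξ‖ ≤ M) (hMC : ∀ ξ, ‖C ξ‖ ≤ M) (α β : Fin n → ℂ) :
    bargmannInner n (coherent n α) (toeplitz n B (toeplitz n C (coherent n β))) =
      (Real.pi : ℂ) ^ (-(2 * n : ℤ)) *
        ∫ ξ₂ : Fin n → ℂ, ∫ ξ₁ : Fin n → ℂ,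
          Complex.exp (-(nsq ξ₂ : ℝ) - (nsq ξ₁ : ℝ)) *
            Complex.exp (hip α ξ₂ + hip ξ₂ ξ₁ + hip ξ₁ β) * B ξ₂ * C ξ₁ := by
  obtain ⟨K, hK⟩ := exists_norm_toeplitz_coherent_le hMC β
  have hΨ : AEStronglyMeasurable (toeplitz n C (coherent n β)) :=
    aestronglyMeasurable_toeplitz hC.aestronglyMeasurable
      (Continuous.aestronglyMeasurable (by unfold coherent; fun_prop))
  have hpi : (Real.pi : ℂ) ≠ 0 := Complex.ofReal_ne_zero.2 Real.pi_ne_zero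
  rw [bargmannInner_coherent_toeplitz (K := M * K) (hB.aestronglyMeasurable.mul hΨ)
      (fun ξ => mul_assoc M K _ ▸ norm_mul_le_of_le (hMB ξ) (hK ξ)),
    show -(2 * n : ℤ) = -n + -n by ring, zpow_add₀ hpi, mul_assoc, ← integral_const_mul,
    bargmannInner]
  congr 1
  refine integral_congr_ae (.of_forall fun ξ₂ => ?_)
  simp only [Pi.mul_apply, toeplitz, coherent, ← Complex.exp_conj, conj_hip,
    ← integral_const_mul, sub_eq_add_neg, Complex.exp_add]
  exact integral_congr_ae (.of_forall fun ξ₁ => by ring)
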